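/- arXiv:1205.5222 — 3 statements merged into one kernel-verified Lean document; each statement's English description precedes it below -/
import Mathlib

section
/- Let ℏ > 0, let Σ be a real symmetric positive definite 2n×2n matrix, set M = (ℏ/2)Σ^{-1}, and let λ_1 ≥ … ≥ λ_n > 0 be the symplectic eigenvalues of M (i.e. SᵀMS = diag(λ_1,…,λ_n,λ_1,…,λ_n) for some symplectic S). If λ_j < 1 for all j, then all Robertson–Schrödinger inequalities for Σ are strict: Σ_{j,j}·Σ_{n+j,n+j} > (Σ_{j,n+j})² + ℏ²/4 for every j = 1,…,n. -/
open Matrix MeasureTheory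
open scoped ComplexOrder

noncomputable section

/-- The standard symplectic matrix `J = [[0, I], [-I, 0]]` of size `2n`, indexed by
`Fin n ⊕ Fin n`: `Sum.inl j` is the coordinate `x_j` and `Sum.inr j` is `p_j`. -/
def stdJ (n : ℕ) : Matrix (Fin n ⊕ Fin n) (Fin n ⊕ Fin n) ℝ :=
  Matrix.fromBlocks 0 1 (-1) 0

/-- A real `2n × 2n` matrix `S` is symplectic if `Sᵀ J S = J`. -/
def IsSymplectic {n : ℕ} (S : Matrix (Fin n ⊕ Fin n) (Fin n ⊕ Fin n) ℝ) : Prop :=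
  Sᵀ * stdJ n * S = stdJ n

/-!
Inverting the Williamson normal form gives `Σ = S G Sᵀ` with `G = diag(μ, μ)`, `μⱼ = (ℏ/2)/λⱼ > ℏ/2`.
Since `Sᵀ` is symplectic, the form `Q(u) + Q(w) - ℏ ⟨u, J w⟩`, `Q(u) = ⟨u, Σ u⟩`, becomes in these
coordinates a sum over `j` of terms that are nonnegative because `μⱼ ≥ ℏ/2`, and strictly positive
for `u ≠ 0` because `μⱼ > ℏ/2`. Testing it on suitable vectors supported on the coordinates `xⱼ, pⱼ`
gives `(ℏ/2)² < det [[Σₓₓ, Σₓₚ], [Σₓₚ, Σₚₚ]]`.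
-/

namespace Matrix

theorem eq_mul_mul_transpose_of_transpose_mul_smul_inv_mul_eq {m K : Type*} [Fintype m]
    [DecidableEq m] [Field K] {A S D G : Matrix m m K} {c : K} (hc : c ≠ 0)
    (hA : IsUnit A.det) (hS : IsUnit S.det) (h : Sᵀ * (c • A⁻¹) * S = D)
    (hDG : D * G = c • 1) : A = S * G * Sᵀ := by
  have hSt : Sᵀ * (A⁻¹ * (S * G * Sᵀ)) = Sᵀ * 1 := by
    apply smul_right_injective _ hc
    calc c • (Sᵀ * (A⁻¹ * (S * G * Sᵀ))) = Sᵀ * (c • A⁻¹) * S * G * Sᵀ := by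
          simp only [Matrix.mul_smul, Matrix.smul_mul, Matrix.mul_assoc]
      _ = c • (Sᵀ * 1) := by rw [h, hDG, Matrix.smul_mul, Matrix.one_mul, Matrix.mul_one]
  have hinv : A⁻¹ * (S * G * Sᵀ) = 1 := by
    simpa only [nonsing_inv_mul_cancel_left _ _ (det_transpose S ▸ hS)] using
      congrArg (Sᵀ⁻¹ * ·) hSt
  rw [← mul_nonsing_inv_cancel_left A (S * G * Sᵀ) hA, hinv, Matrix.mul_one]

end Matrix

section Symplectic

variable {n : ℕ}

theorem stdJ_eq_neg_J (n : ℕ) : stdJ n = -J (Fin n) ℝ := by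
  rw [stdJ, J, fromBlocks_neg, neg_zero, neg_neg]

theorem isSymplectic_iff_mem_symplecticGroup {S : Matrix (Fin n ⊕ Fin n) (Fin n ⊕ Fin n) ℝ} :
    IsSymplectic S ↔ S ∈ symplecticGroup (Fin n) ℝ := by
  rw [SymplecticGroup.mem_iff', IsSymplectic, stdJ_eq_neg_J, Matrix.mul_neg, Matrix.neg_mul,
    neg_inj]

theorem IsSymplectic.isUnit_det {S : Matrix (Fin n ⊕ Fin n) (Fin n ⊕ Fin n) ℝ}
    (hS : IsSymplectic S) : IsUnit S.det :=
  SymplecticGroup.symplectic_det (isSymplectic_iff_mem_symplecticGroup.1 hS)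

theorem IsSymplectic.transpose {S : Matrix (Fin n ⊕ Fin n) (Fin n ⊕ Fin n) ℝ}
    (hS : IsSymplectic S) : IsSymplectic Sᵀ :=
  isSymplectic_iff_mem_symplecticGroup.2
    (SymplecticGroup.transpose_mem (isSymplectic_iff_mem_symplecticGroup.1 hS))

theorem dotProduct_stdJ_mulVec (a b : Fin n ⊕ Fin n → ℝ) :
    a ⬝ᵥ (stdJ n *ᵥ b) = ∑ i, (a (.inl i) * b (.inr i) - a (.inr i) * b (.inl i)) := by
  rw [Finset.sum_sub_distrib]
  simp [dotProduct, mulVec, stdJ, Fintype.sum_sum_type, one_apply, sub_eq_add_neg]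

theorem IsSymplectic.dotProduct_stdJ_mulVec_transpose
    {S : Matrix (Fin n ⊕ Fin n) (Fin n ⊕ Fin n) ℝ} (hS : IsSymplectic S)
    (u w : Fin n ⊕ Fin n → ℝ) :
    (Sᵀ *ᵥ u) ⬝ᵥ (stdJ n *ᵥ (Sᵀ *ᵥ w)) = u ⬝ᵥ (stdJ n *ᵥ w) := by
  conv_rhs => rw [← hS.transpose]
  rw [transpose_transpose, ← mulVec_mulVec, ← mulVec_mulVec, dotProduct_mulVec u S,
    ← mulVec_transpose]

theorem dotProduct_fromBlocks_diagonal_mulVec (μ : Fin n → ℝ) (a : Fin n ⊕ Fin n → ℝ) :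
    a ⬝ᵥ (fromBlocks (diagonal μ) 0 0 (diagonal μ) *ᵥ a)
      = ∑ i, μ i * (a (.inl i) ^ 2 + a (.inr i) ^ 2) := by
  simp only [fromBlocks_diagonal, mulVec_diagonal, dotProduct, Fintype.sum_sum_type,
    Sum.elim_inl, Sum.elim_inr, ← Finset.sum_add_distrib]
  exact Finset.sum_congr rfl fun i _ => by ring

theorem two_mul_dotProduct_stdJ_mulVec_lt {c : ℝ} (hc : 0 ≤ c) {μ : Fin n → ℝ}
    (hμ : ∀ i, c < μ i) {a : Fin n ⊕ Fin n → ℝ} (ha : a ≠ 0) (b : Fin n ⊕ Fin n → ℝ) :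
    2 * c * (a ⬝ᵥ (stdJ n *ᵥ b))
      < a ⬝ᵥ (fromBlocks (diagonal μ) 0 0 (diagonal μ) *ᵥ a)
        + b ⬝ᵥ (fromBlocks (diagonal μ) 0 0 (diagonal μ) *ᵥ b) := by
  rw [dotProduct_stdJ_mulVec, dotProduct_fromBlocks_diagonal_mulVec,
    dotProduct_fromBlocks_diagonal_mulVec, Finset.mul_sum, ← Finset.sum_add_distrib]
  -- the gap at `i` is `(μ i - c)(|aᵢ|² + |bᵢ|²) + c((aₓ - b_p)² + (a_p + bₓ)²)`
  have gap : ∀ i, (μ i - c) * (a (.inl i) ^ 2 + a (.inr i) ^ 2)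
      ≤ μ i * (a (.inl i) ^ 2 + a (.inr i) ^ 2) + μ i * (b (.inl i) ^ 2 + b (.inr i) ^ 2)
        - 2 * c * (a (.inl i) * b (.inr i) - a (.inr i) * b (.inl i)) := fun i => by
    nlinarith [mul_nonneg hc (sq_nonneg (a (.inl i) - b (.inr i))),
      mul_nonneg hc (sq_nonneg (a (.inr i) + b (.inl i))),
      mul_nonneg (sub_nonneg.2 (hμ i).le) (add_nonneg (sq_nonneg (b (.inl i)))
        (sq_nonneg (b (.inr i))))]
  have gap_pos : ∀ i, a (.inl i) ≠ 0 ∨ a (.inr i) ≠ 0 →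
      0 < (μ i - c) * (a (.inl i) ^ 2 + a (.inr i) ^ 2) := fun i hi => by
    refine mul_pos (sub_pos.2 (hμ i)) ?_
    rcases hi with hi | hi <;> positivity
  refine Finset.sum_lt_sum (fun i _ => by
    linarith [gap i, mul_nonneg (sub_nonneg.2 (hμ i).le)
      (add_nonneg (sq_nonneg (a (.inl i))) (sq_nonneg (a (.inr i))))]) ?_
  obtain ⟨k | k, hk⟩ := Function.ne_iff.mp ha
  · exact ⟨k, Finset.mem_univ _, by linarith [gap k, gap_pos k (.inl hk)]⟩
  · exact ⟨k, Finset.mem_univ _, by linarith [gap k, gap_pos k (.inr hk)]⟩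

theorem IsSymplectic.two_mul_dotProduct_stdJ_mulVec_lt_mul_mul_transpose
    {S : Matrix (Fin n ⊕ Fin n) (Fin n ⊕ Fin n) ℝ} (hS : IsSymplectic S) {c : ℝ} (hc : 0 ≤ c)
    {μ : Fin n → ℝ} (hμ : ∀ i, c < μ i) {u : Fin n ⊕ Fin n → ℝ} (hu : u ≠ 0)
    (w : Fin n ⊕ Fin n → ℝ) :
    2 * c * (u ⬝ᵥ (stdJ n *ᵥ w))
      < u ⬝ᵥ ((S * fromBlocks (diagonal μ) 0 0 (diagonal μ) * Sᵀ) *ᵥ u)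
        + w ⬝ᵥ ((S * fromBlocks (diagonal μ) 0 0 (diagonal μ) * Sᵀ) *ᵥ w) := by
  have congruence : ∀ (G : Matrix (Fin n ⊕ Fin n) (Fin n ⊕ Fin n) ℝ) (v : Fin n ⊕ Fin n → ℝ),
      v ⬝ᵥ ((S * G * Sᵀ) *ᵥ v) = (Sᵀ *ᵥ v) ⬝ᵥ (G *ᵥ (Sᵀ *ᵥ v)) := fun G v => by
    rw [← mulVec_mulVec, ← mulVec_mulVec, dotProduct_mulVec v S, ← mulVec_transpose]
  have hSu : Sᵀ *ᵥ u ≠ 0 := fun h =>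
    hu (eq_zero_of_mulVec_eq_zero hS.transpose.isUnit_det.ne_zero h)
  rw [congruence, congruence, ← hS.dotProduct_stdJ_mulVec_transpose]
  exact two_mul_dotProduct_stdJ_mulVec_lt hc hμ hSu _

theorem sq_add_sq_lt_mul_of_two_mul_dotProduct_stdJ_mulVec_lt
    {C : Matrix (Fin n ⊕ Fin n) (Fin n ⊕ Fin n) ℝ} (hC : C.PosDef) {c : ℝ}
    (h : ∀ u, u ≠ 0 → ∀ w, 2 * c * (u ⬝ᵥ (stdJ n *ᵥ w)) < u ⬝ᵥ (C *ᵥ u) + w ⬝ᵥ (C *ᵥ w))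
    (j : Fin n) :
    C (.inl j) (.inr j) ^ 2 + c ^ 2 < C (.inl j) (.inl j) * C (.inr j) (.inr j) := by
  set P := C (.inl j) (.inl j)
  set B := C (.inr j) (.inr j)
  set q := C (.inl j) (.inr j)
  have hP : 0 < P := hC.diag_pos
  have hsymm : C (.inr j) (.inl j) = q := by simpa using hC.isHermitian.apply (.inl j) (.inr j)
  -- `u ⊥ C e_{xⱼ}`, so `⟨u, C u⟩ = P (P B - q²)`, while `⟨w, C w⟩ = P c²` and `⟨u, J w⟩ = P c`
  set u : Fin n ⊕ Fin n → ℝ := Pi.single (.inl j) (-q) + Pi.single (.inr j) P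
  set w : Fin n ⊕ Fin n → ℝ := Pi.single (.inl j) (-c)
  have hu : u ≠ 0 := fun hu => hP.ne' (by simpa [u] using congrFun hu (.inr j))
  have hCu : u ⬝ᵥ (C *ᵥ u) = P * (P * B - q ^ 2) := by
    simp only [u, mulVec_add, mulVec_single, dotProduct_add, add_dotProduct, single_dotProduct,
      Pi.smul_apply, op_smul_eq_mul, col_apply, hsymm]
    ring
  have hCw : w ⬝ᵥ (C *ᵥ w) = P * c ^ 2 := by
    simp only [w, mulVec_single, single_dotProduct, Pi.smul_apply, op_smul_eq_mul, col_apply]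
    ring
  have hJ : u ⬝ᵥ (stdJ n *ᵥ w) = P * c := by
    rw [dotProduct_stdJ_mulVec, Finset.sum_eq_single j (fun k _ hk => by simp [u, w, hk])
      (by simp)]
    simp [u, w]
  have key := h u hu w
  rw [hCu, hCw, hJ] at key
  nlinarith

end Symplectic

theorem stmt10_general {n : ℕ} (ℏ : ℝ) (hℏ : 0 < ℏ)
    (Cov : Matrix (Fin n ⊕ Fin n) (Fin n ⊕ Fin n) ℝ)
    (hCovPos : Cov.PosDef)
    (lam : Fin n → ℝ) (hlampos : ∀ j, 0 < lam j)
    (S : Matrix (Fin n ⊕ Fin n) (Fin n ⊕ Fin n) ℝ) (hS : IsSymplectic S)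
    (hdiag : Sᵀ * ((ℏ / 2) • Cov⁻¹) * S
        = Matrix.fromBlocks (Matrix.diagonal lam) 0 0 (Matrix.diagonal lam))
    (hlt : ∀ j, lam j < 1) :
    ∀ j : Fin n,
      Cov (Sum.inl j) (Sum.inl j) * Cov (Sum.inr j) (Sum.inr j)
        > Cov (Sum.inl j) (Sum.inr j) ^ 2 + ℏ ^ 2 / 4 := by
  set μ : Fin n → ℝ := fun i => ℏ / 2 / lam i
  have hμ : ∀ i, ℏ / 2 < μ i := fun i =>
    (lt_div_iff₀ (hlampos i)).2 (by nlinarith [hlt i])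
  have hlamμ : fromBlocks (diagonal lam) 0 0 (diagonal lam)
      * fromBlocks (diagonal μ) 0 0 (diagonal μ) = (ℏ / 2) • 1 := by
    rw [fromBlocks_diagonal, fromBlocks_diagonal, diagonal_mul_diagonal, smul_one_eq_diagonal]
    congr 1
    ext (i | i) <;> simp [μ, mul_div_cancel₀ _ (hlampos i).ne']
  have hCov : Cov = S * fromBlocks (diagonal μ) 0 0 (diagonal μ) * Sᵀ :=
    eq_mul_mul_transpose_of_transpose_mul_smul_inv_mul_eq (by positivity)
      ((isUnit_iff_isUnit_det _).1 hCovPos.isUnit) hS.isUnit_det hdiag hlamμ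
  intro j
  have := sq_add_sq_lt_mul_of_two_mul_dotProduct_stdJ_mulVec_lt hCovPos (c := ℏ / 2)
    (fun u hu w => hCov ▸ hS.two_mul_dotProduct_stdJ_mulVec_lt_mul_mul_transpose
      (by positivity) hμ hu w) j
  linarith

/-- Let `Σ` be symmetric positive definite, `M = (ℏ/2)Σ⁻¹`, and let
`λ₁ ≥ … ≥ λₙ > 0` be the symplectic eigenvalues of `M` (i.e. `Sᵀ M S = [[Λ,0],[0,Λ]]` for some
symplectic `S`). If `λⱼ < 1` for all `j`, then all Robertson–Schrödinger inequalities for `Σ` are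
strict. -/
theorem stmt10 {n : ℕ} (ℏ : ℝ) (hℏ : 0 < ℏ)
    (Cov : Matrix (Fin n ⊕ Fin n) (Fin n ⊕ Fin n) ℝ)
    (hCovSymm : Cov.IsSymm) (hCovPos : Cov.PosDef)
    (lam : Fin n → ℝ) (hlampos : ∀ j, 0 < lam j) (hord : Antitone lam)
    (S : Matrix (Fin n ⊕ Fin n) (Fin n ⊕ Fin n) ℝ) (hS : IsSymplectic S)
    (hdiag : Sᵀ * ((ℏ / 2) • Cov⁻¹) * S
        = Matrix.fromBlocks (Matrix.diagonal lam) 0 0 (Matrix.diagonal lam))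
    (hlt : ∀ j, lam j < 1) :
    ∀ j : Fin n,
      Cov (Sum.inl j) (Sum.inl j) * Cov (Sum.inr j) (Sum.inr j)
        > Cov (Sum.inl j) (Sum.inr j) ^ 2 + ℏ ^ 2 / 4 :=
  stmt10_general ℏ hℏ Cov hCovPos lam hlampos S hS hdiag hlt
end
end

section
/- Let ℏ > 0 and let Σ be a real symmetric positive definite 2n×2n matrix such that the complex Hermitian matrix Σ + (iℏ/2)J is positive semidefinite, and suppose one Robertson–Schrödinger inequality is saturated: Σ_{1,1}·Σ_{n+1,n+1} = (Σ_{1,n+1})² + ℏ²/4. Then the largest symplectic eigenvalue of M = (ℏ/2)Σ^{-1} equals 1; equivalently, the symplectic capacity of the covariance ellipsoid Ω = {z : zᵀMz ≤ ℏ} equals (1/2)h = πℏ. -/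
/-!
Williamson's normal form writes `Σ = S diag(ν, ν) Sᵀ` with `S` symplectic and `ν_j = ℏ / (2 λ_j)`,
so congruence by `S` carries `Σ + (iℏ/2)J` to `diag(ν, ν) + (iℏ/2)J`. In the `(x_j, p_j)` plane
the principal `2 × 2` minor of the latter is `ν_j² - ℏ²/4`, so the quantum condition gives
`λ_j ≤ 1`. Saturating the Robertson–Schrödinger inequality makes a principal `2 × 2` minor of the
positive semidefinite matrix `Σ + (iℏ/2)J` vanish, which forces it, and hence its normal form, to
be singular. The normal form times its complex conjugate is `diag(ν² - ℏ²/4)`, so some `λ_j = 1`,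
and `λ_1 ≥ λ_j`.
-/

open Matrix MeasureTheory
open scoped ComplexOrder

noncomputable section

namespace Matrix.PosSemidef

variable {ι 𝕜 : Type*} [RCLike 𝕜] {Q : Matrix ι ι 𝕜}

theorem minor_nonneg (hQ : Q.PosSemidef) (i j : ι) : 0 ≤ Q i i * Q j j - Q i j * Q j i := by
  have h := (hQ.submatrix ![i, j]).det_nonneg
  rwa [det_fin_two] at h

theorem det_eq_zero_of_minor_eq_zero [Fintype ι] [DecidableEq ι] (hQ : Q.PosSemidef) {i j : ι}
    (hij : i ≠ j) (h : Q i i * Q j j - Q i j * Q j i = 0) : Q.det = 0 := by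
  rw [← exists_mulVec_eq_zero_iff]
  by_cases hi : Q i i = 0
  · refine ⟨Pi.single i 1, by simp, ?_⟩
    rw [← hQ.dotProduct_mulVec_zero_iff]
    simp [hi]
  · -- `(Q i j, -Q i i)` spans the kernel of the singular `2 × 2` block at `i, j`
    set v : ι → 𝕜 := Pi.single i (Q i j) - Pi.single j (Q i i)
    refine ⟨v, fun hv => hi (by simpa [v, hij] using congrFun hv j), ?_⟩
    have hvi : (Q *ᵥ v) i = 0 := by simp [v, mulVec_sub, mulVec_single]; ring
    have hvj : (Q *ᵥ v) j = 0 := by simp [v, mulVec_sub, mulVec_single]; linear_combination -h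
    rw [← hQ.dotProduct_mulVec_zero_iff]
    simp [v, sub_dotProduct, single_dotProduct, hvi, hvj]

end Matrix.PosSemidef

theorem Matrix.eq_mul_mul_transpose_of_transpose_mul_inv_mul_eq {ι K : Type*} [Fintype ι]
    [DecidableEq ι] [Field K] {A S D D' : Matrix ι ι K} (hA : IsUnit A.det) (hS : IsUnit S.det)
    (h : Sᵀ * A⁻¹ * S = D) (hD : D' * D = 1) : A = S * D' * Sᵀ := by
  rw [← nonsing_inv_nonsing_inv A hA]
  refine inv_eq_left_inv ?_
  calc S * D' * Sᵀ * A⁻¹ = S * D' * (Sᵀ * A⁻¹ * S) * S⁻¹ := by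
        simp only [Matrix.mul_assoc, mul_nonsing_inv _ hS, Matrix.mul_one]
    _ = 1 := by rw [h, Matrix.mul_assoc S, hD, Matrix.mul_one, mul_nonsing_inv _ hS]

theorem Matrix.map_ofReal_mul {ι : Type*} [Fintype ι] (B C : Matrix ι ι ℝ) :
    (B * C).map Complex.ofReal = B.map Complex.ofReal * C.map Complex.ofReal :=
  Matrix.map_mul (f := Complex.ofRealHom)

section Symplectic

variable {n : ℕ}

theorem stdJ_mul_self (n : ℕ) : stdJ n * stdJ n = -1 := by
  simp [stdJ, fromBlocks_multiply, ← fromBlocks_one, fromBlocks_neg]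

theorem commute_stdJ_diagonal (ν : Fin n → ℝ) :
    Commute (stdJ n) (diagonal (Sum.elim ν ν)) := by
  simp [Commute, SemiconjBy, stdJ, ← fromBlocks_diagonal, fromBlocks_multiply]

theorem IsSymplectic.mul_stdJ_mul_transpose_mul_stdJ
    {S : Matrix (Fin n ⊕ Fin n) (Fin n ⊕ Fin n) ℝ} (hS : IsSymplectic S) :
    S * (stdJ n * Sᵀ * stdJ n) = -1 := by
  have hS' : Sᵀ * (stdJ n * S) = stdJ n := by rw [← Matrix.mul_assoc]; exact hS
  have hleft : -(stdJ n * Sᵀ * stdJ n) * S = 1 := by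
    simp only [Matrix.neg_mul, Matrix.mul_assoc, hS', stdJ_mul_self, neg_neg]
  rw [← neg_eq_iff_eq_neg, ← Matrix.mul_neg]
  exact mul_eq_one_comm.mp hleft

theorem IsSymplectic.mul_stdJ_mul_transpose {S : Matrix (Fin n ⊕ Fin n) (Fin n ⊕ Fin n) ℝ}
    (hS : IsSymplectic S) : S * stdJ n * Sᵀ = stdJ n := by
  calc S * stdJ n * Sᵀ = -(S * (stdJ n * Sᵀ * stdJ n) * stdJ n) := by
        simp only [Matrix.mul_assoc, stdJ_mul_self, Matrix.mul_neg, Matrix.mul_one, neg_neg]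
    _ = stdJ n := by
        rw [hS.mul_stdJ_mul_transpose_mul_stdJ, Matrix.neg_mul, Matrix.one_mul, neg_neg]

/-- The matrix `Σ + (iℏ/2)J` of the quantum condition. -/
def quantumMatrix (ℏ : ℝ) (A : Matrix (Fin n ⊕ Fin n) (Fin n ⊕ Fin n) ℝ) :
    Matrix (Fin n ⊕ Fin n) (Fin n ⊕ Fin n) ℂ :=
  A.map Complex.ofReal + (Complex.I * ((ℏ : ℂ) / 2)) • (stdJ n).map Complex.ofReal

theorem quantumMatrix_minor (ℏ : ℝ) {A : Matrix (Fin n ⊕ Fin n) (Fin n ⊕ Fin n) ℝ}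
    (hA : A.IsSymm) (i : Fin n) :
    quantumMatrix ℏ A (.inl i) (.inl i) * quantumMatrix ℏ A (.inr i) (.inr i)
        - quantumMatrix ℏ A (.inl i) (.inr i) * quantumMatrix ℏ A (.inr i) (.inl i) =
      ((A (.inl i) (.inl i) * A (.inr i) (.inr i) - A (.inl i) (.inr i) ^ 2 - ℏ ^ 2 / 4 : ℝ) :
        ℂ) := by
  simp only [quantumMatrix, stdJ, Matrix.add_apply, Matrix.smul_apply, map_apply,
    fromBlocks_apply₁₁, fromBlocks_apply₁₂, fromBlocks_apply₂₁, fromBlocks_apply₂₂,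
    Matrix.zero_apply, Matrix.neg_apply, one_apply_eq, hA.apply (.inl i) (.inr i)]
  push_cast
  linear_combination (ℏ : ℂ) ^ 2 / 4 * Complex.I_sq

theorem robertson_schrodinger_of_posSemidef {ℏ : ℝ}
    {A : Matrix (Fin n ⊕ Fin n) (Fin n ⊕ Fin n) ℝ} (hA : A.IsSymm)
    (hQ : (quantumMatrix ℏ A).PosSemidef) (i : Fin n) :
    A (.inl i) (.inr i) ^ 2 + ℏ ^ 2 / 4 ≤ A (.inl i) (.inl i) * A (.inr i) (.inr i) := by
  have h := hQ.minor_nonneg (.inl i) (.inr i)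
  rw [quantumMatrix_minor ℏ hA, Complex.zero_le_real] at h
  linarith

theorem det_quantumMatrix_eq_zero_of_saturated {ℏ : ℝ}
    {A : Matrix (Fin n ⊕ Fin n) (Fin n ⊕ Fin n) ℝ} (hA : A.IsSymm)
    (hQ : (quantumMatrix ℏ A).PosSemidef) (i : Fin n)
    (hsat : A (.inl i) (.inl i) * A (.inr i) (.inr i) = A (.inl i) (.inr i) ^ 2 + ℏ ^ 2 / 4) :
    (quantumMatrix ℏ A).det = 0 :=
  hQ.det_eq_zero_of_minor_eq_zero Sum.inl_ne_inr <| by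
    rw [quantumMatrix_minor ℏ hA, hsat]; push_cast; ring

theorem IsSymplectic.isUnit_det_map_ofReal {S : Matrix (Fin n ⊕ Fin n) (Fin n ⊕ Fin n) ℝ}
    (hS : IsSymplectic S) : IsUnit (S.map Complex.ofReal).det := by
  change IsUnit (Complex.ofRealHom.mapMatrix S).det
  rw [← RingHom.map_det]
  exact hS.isUnit_det.map _

theorem IsSymplectic.quantumMatrix_mul_mul_transpose
    {S : Matrix (Fin n ⊕ Fin n) (Fin n ⊕ Fin n) ℝ} (hS : IsSymplectic S) (ℏ : ℝ)
    (A : Matrix (Fin n ⊕ Fin n) (Fin n ⊕ Fin n) ℝ) :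
    quantumMatrix ℏ (S * A * Sᵀ)
      = S.map Complex.ofReal * quantumMatrix ℏ A * star (S.map Complex.ofReal) := by
  have hstar : star (S.map Complex.ofReal) = Sᵀ.map Complex.ofReal := by
    ext i j; simp
  conv_lhs => rw [quantumMatrix, ← hS.mul_stdJ_mul_transpose]
  rw [quantumMatrix, hstar, map_ofReal_mul, map_ofReal_mul, map_ofReal_mul, map_ofReal_mul,
    Matrix.mul_add, Matrix.add_mul, Matrix.mul_smul, Matrix.smul_mul]

theorem IsSymplectic.posSemidef_quantumMatrix_mul_mul_transpose_iff
    {S : Matrix (Fin n ⊕ Fin n) (Fin n ⊕ Fin n) ℝ} (hS : IsSymplectic S) (ℏ : ℝ)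
    (A : Matrix (Fin n ⊕ Fin n) (Fin n ⊕ Fin n) ℝ) :
    (quantumMatrix ℏ (S * A * Sᵀ)).PosSemidef ↔ (quantumMatrix ℏ A).PosSemidef := by
  rw [hS.quantumMatrix_mul_mul_transpose]
  exact ((isUnit_iff_isUnit_det _).mpr hS.isUnit_det_map_ofReal).posSemidef_star_right_conjugate_iff

theorem IsSymplectic.det_quantumMatrix_mul_mul_transpose_eq_zero_iff
    {S : Matrix (Fin n ⊕ Fin n) (Fin n ⊕ Fin n) ℝ} (hS : IsSymplectic S) (ℏ : ℝ)
    (A : Matrix (Fin n ⊕ Fin n) (Fin n ⊕ Fin n) ℝ) :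
    (quantumMatrix ℏ (S * A * Sᵀ)).det = 0 ↔ (quantumMatrix ℏ A).det = 0 := by
  have hU := hS.isUnit_det_map_ofReal
  rw [hS.quantumMatrix_mul_mul_transpose, det_mul, det_mul, star_eq_conjTranspose,
    det_conjTranspose, hU.star.mul_left_eq_zero, hU.mul_right_eq_zero]

theorem quantumMatrix_diagonal_mul_quantumMatrix_neg (ℏ : ℝ) (ν : Fin n → ℝ) :
    quantumMatrix ℏ (diagonal (Sum.elim ν ν)) * quantumMatrix (-ℏ) (diagonal (Sum.elim ν ν))
      = (diagonal fun k => Sum.elim ν ν k ^ 2 - (ℏ / 2) ^ 2).map Complex.ofReal := by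
  set D := (diagonal (Sum.elim ν ν)).map Complex.ofReal
  set J := (stdJ n).map Complex.ofReal
  set c := Complex.I * ((ℏ : ℂ) / 2)
  have hJ : J * J = -1 := by
    rw [← map_ofReal_mul, stdJ_mul_self, Matrix.map_neg, Matrix.map_one] <;> simp
  have hDJ : J * D = D * J := by
    rw [← map_ofReal_mul, ← map_ofReal_mul, (commute_stdJ_diagonal ν).eq]
  have hc : c * c = -((ℏ : ℂ) / 2) ^ 2 := by
    linear_combination ((ℏ : ℂ) / 2) ^ 2 * Complex.I_sq
  calc quantumMatrix ℏ (diagonal (Sum.elim ν ν)) * quantumMatrix (-ℏ) (diagonal (Sum.elim ν ν))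
      = (D + c • J) * (D - c • J) := by
        simp only [quantumMatrix, Complex.ofReal_neg, neg_div, mul_neg, neg_smul, sub_eq_add_neg]
        rfl
    _ = D * D - (c * c) • (J * J) := by
        rw [Matrix.add_mul, Matrix.mul_sub, Matrix.mul_sub, Matrix.smul_mul, Matrix.smul_mul,
          Matrix.mul_smul, Matrix.mul_smul, smul_smul, hDJ]
        abel
    _ = (diagonal fun k => Sum.elim ν ν k ^ 2 - (ℏ / 2) ^ 2).map Complex.ofReal := by
        rw [hJ, hc, show D = diagonal fun k => ((Sum.elim ν ν k : ℝ) : ℂ) from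
            diagonal_map Complex.ofReal_zero,
          diagonal_mul_diagonal, neg_smul, smul_neg, neg_neg, ← diagonal_one, ← diagonal_smul,
          diagonal_sub, diagonal_map Complex.ofReal_zero]
        congr 1
        ext k
        simp only [Pi.smul_apply, smul_eq_mul, mul_one]
        push_cast
        ring

theorem exists_eq_of_det_quantumMatrix_diagonal_eq_zero {ℏ : ℝ} (hℏ : 0 ≤ ℏ) {ν : Fin n → ℝ}
    (hν : ∀ j, 0 ≤ ν j) (h : (quantumMatrix ℏ (diagonal (Sum.elim ν ν))).det = 0) :
    ∃ j, ν j = ℏ / 2 := by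
  have hprod := congrArg det (quantumMatrix_diagonal_mul_quantumMatrix_neg ℏ ν)
  rw [det_mul, h, zero_mul, diagonal_map Complex.ofReal_zero, det_diagonal, eq_comm,
    Finset.prod_eq_zero_iff] at hprod
  obtain ⟨k, -, hk⟩ := hprod
  rw [Complex.ofReal_eq_zero, sub_eq_zero] at hk
  have hk' := (sq_eq_sq₀ (by cases k <;> exact hν _) (by positivity)).mp hk
  cases k with
  | inl j => exact ⟨j, hk'⟩
  | inr j => exact ⟨j, hk'⟩

theorem half_le_of_posSemidef_quantumMatrix_diagonal {ℏ : ℝ} {ν : Fin n → ℝ}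
    (hK : (quantumMatrix ℏ (diagonal (Sum.elim ν ν))).PosSemidef) {j : Fin n} (hν : 0 ≤ ν j) :
    ℏ / 2 ≤ ν j := by
  have h := robertson_schrodinger_of_posSemidef (isSymm_diagonal _) hK j
  simp only [diagonal_apply_eq, diagonal_apply_ne _ Sum.inl_ne_inr, Sum.elim_inl,
    Sum.elim_inr] at h
  nlinarith

theorem eq_mul_diagonal_mul_transpose_of_williamson {ℏ : ℝ} (hℏ : ℏ ≠ 0)
    {Cov S : Matrix (Fin n ⊕ Fin n) (Fin n ⊕ Fin n) ℝ} (hCov : IsUnit Cov.det)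
    (hS : IsSymplectic S) {lam : Fin n → ℝ} (hlam : ∀ j, lam j ≠ 0)
    (hdiag : Sᵀ * ((ℏ / 2) • Cov⁻¹) * S = fromBlocks (diagonal lam) 0 0 (diagonal lam)) :
    Cov = S * diagonal (Sum.elim (fun j => ℏ / 2 / lam j) (fun j => ℏ / 2 / lam j)) * Sᵀ := by
  refine eq_mul_mul_transpose_of_transpose_mul_inv_mul_eq hCov hS.isUnit_det
    (D := (ℏ / 2)⁻¹ • diagonal (Sum.elim lam lam)) ?_ ?_
  · rw [← fromBlocks_diagonal, ← hdiag, Matrix.mul_smul, Matrix.smul_mul, smul_smul,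
      inv_mul_cancel₀ (by positivity), one_smul]
  · rw [Matrix.mul_smul, diagonal_mul_diagonal, ← diagonal_smul, ← diagonal_one]
    congr 1
    ext (j | j) <;> simp <;> field_simp [hlam j]

end Symplectic

/-- If `Σ` is symmetric positive definite, satisfies the quantum condition
`Σ + (iℏ/2)J ≥ 0`, and saturates the first Robertson–Schrödinger inequality, then the largest
symplectic eigenvalue `λ₁` of `M = (ℏ/2)Σ⁻¹` equals `1` (equivalently, the symplectic capacity
`πℏ/λ₁` of the covariance ellipsoid `Ω = {z : zᵀMz ≤ ℏ}` equals `(1/2)h = πℏ`). -/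
theorem stmt11 {n : ℕ} (hn : 0 < n) (ℏ : ℝ) (hℏ : 0 < ℏ)
    (Cov : Matrix (Fin n ⊕ Fin n) (Fin n ⊕ Fin n) ℝ)
    (hCovSymm : Cov.IsSymm) (hCovPos : Cov.PosDef)
    (hquant : (Cov.map Complex.ofReal
        + (Complex.I * ((ℏ : ℂ) / 2)) • (stdJ n).map Complex.ofReal).PosSemidef)
    (hsat : Cov (Sum.inl ⟨0, hn⟩) (Sum.inl ⟨0, hn⟩) * Cov (Sum.inr ⟨0, hn⟩) (Sum.inr ⟨0, hn⟩)
        = Cov (Sum.inl ⟨0, hn⟩) (Sum.inr ⟨0, hn⟩) ^ 2 + ℏ ^ 2 / 4)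
    (lam : Fin n → ℝ) (hlampos : ∀ j, 0 < lam j) (hord : Antitone lam)
    (S : Matrix (Fin n ⊕ Fin n) (Fin n ⊕ Fin n) ℝ) (hS : IsSymplectic S)
    (hdiag : Sᵀ * ((ℏ / 2) • Cov⁻¹) * S
        = Matrix.fromBlocks (Matrix.diagonal lam) 0 0 (Matrix.diagonal lam)) :
    lam ⟨0, hn⟩ = 1 := by
  set ν : Fin n → ℝ := fun j => ℏ / 2 / lam j
  have hν : ∀ j, 0 ≤ ν j := fun j => div_nonneg (by positivity) (hlampos j).le
  change (quantumMatrix ℏ Cov).PosSemidef at hquant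
  have hdet := det_quantumMatrix_eq_zero_of_saturated hCovSymm hquant ⟨0, hn⟩ hsat
  have hCov : Cov = S * diagonal (Sum.elim ν ν) * Sᵀ :=
    eq_mul_diagonal_mul_transpose_of_williamson hℏ.ne' hCovPos.det_pos.ne'.isUnit hS
      (fun j => (hlampos j).ne') hdiag
  rw [hCov, hS.posSemidef_quantumMatrix_mul_mul_transpose_iff] at hquant
  rw [hCov, hS.det_quantumMatrix_mul_mul_transpose_eq_zero_iff] at hdet
  obtain ⟨j, hj⟩ := exists_eq_of_det_quantumMatrix_diagonal_eq_zero hℏ.le hν hdet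
  have hle : ℏ / 2 ≤ ν ⟨0, hn⟩ := half_le_of_posSemidef_quantumMatrix_diagonal hquant (hν _)
  have hlam_le : lam ⟨0, hn⟩ ≤ 1 := by
    rw [le_div_iff₀ (hlampos _)] at hle
    exact (mul_le_iff_le_one_right (by positivity)).mp hle
  have hlam_j : lam j = 1 := by
    rw [div_eq_iff (hlampos j).ne', eq_comm, mul_eq_left₀ (by positivity)] at hj
    exact hj
  exact le_antisymm hlam_le (hlam_j ▸ hord (show ⟨0, hn⟩ ≤ j from Nat.zero_le _))
end
end

section
/- (Symplectic capacity of an ellipsoid.) Let ℏ > 0, let M be a real symmetric positive definite 2n×2n matrix with symplectic eigenvalues λ_1 ≥ … ≥ λ_n > 0, and let Ω = {z ∈ ℝ^{2n} : zᵀMz ≤ ℏ}. Then for every R > 0: there exists a real symplectic matrix S with S(B_R) ⊆ Ω if and only if λ_1 R² ≤ ℏ. Consequently the supremum of πR² over all symplectic balls S(B_R) contained in Ω equals πℏ/λ_1. -/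
/-!
Conjugating by `S₀`, the form of `M` pulled back by a symplectic `S` is `Tᵀ D T` with
`T = S₀⁻¹ S` symplectic and `D = diag(λ, λ)`, and `S(B_R) ⊆ Ω` says that this form is at most
`c = ℏ / R²` times the Euclidean one. For `S = S₀` this holds as soon as `λ₁ ≤ c`. Conversely,
test the form on a row `r` of `T`: the matching entry of `T r` is `|r|²`, so `λ_j |r|⁴ ≤ c |r|²`.
The rows `r, r'` of `T` indexed by `x_j` and `p_j` satisfy `r ⬝ J r' = 1` because `Tᵀ` is
symplectic too, hence `1 ≤ |r| |r'|` by Cauchy–Schwarz, and the two bounds give `λ_j ≤ c`.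
-/

open Matrix

noncomputable section

section Quadratic

variable {ι : Type*} [Fintype ι]

theorem dotProduct_transpose_mul_mul_mulVec (A S : Matrix ι ι ℝ) (z : ι → ℝ) :
    z ⬝ᵥ (Sᵀ * A * S) *ᵥ z = (S *ᵥ z) ⬝ᵥ A *ᵥ (S *ᵥ z) := by
  rw [← mulVec_mulVec, ← mulVec_mulVec, dotProduct_mulVec, vecMul_transpose]

theorem sq_dotProduct_le (x y : ι → ℝ) : (x ⬝ᵥ y) ^ 2 ≤ (x ⬝ᵥ x) * (y ⬝ᵥ y) := by
  simpa only [dotProduct, sq] using Finset.sum_mul_sq_le_sq_mul_sq Finset.univ x y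

theorem setOf_dotProduct_self_le_subset_iff (N : Matrix ι ι ℝ) {R c : ℝ} (hR : 0 < R)
    (hc : 0 ≤ c) :
    {z | z ⬝ᵥ z ≤ R ^ 2} ⊆ {z | z ⬝ᵥ N *ᵥ z ≤ c} ↔
      ∀ z, z ⬝ᵥ N *ᵥ z ≤ c / R ^ 2 * (z ⬝ᵥ z) := by
  constructor
  · intro hsub z
    rcases eq_or_ne z 0 with rfl | hz
    · simp
    have hzz : 0 < z ⬝ᵥ z := by simpa using dotProduct_self_star_pos_iff.2 hz
    set t := R / √(z ⬝ᵥ z)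
    have ht : t ^ 2 * (z ⬝ᵥ z) = R ^ 2 := by
      rw [div_pow, Real.sq_sqrt hzz.le, div_mul_cancel₀ _ hzz.ne']
    have hin : (t • z) ⬝ᵥ N *ᵥ (t • z) ≤ c := hsub <| by
      show (t • z) ⬝ᵥ (t • z) ≤ R ^ 2
      simp only [smul_dotProduct, dotProduct_smul, smul_eq_mul, ← mul_assoc, ← sq, ht, le_refl]
    simp only [mulVec_smul, smul_dotProduct, dotProduct_smul, smul_eq_mul, ← mul_assoc,
      ← sq] at hin
    rw [div_mul_eq_mul_div, le_div_iff₀ (by positivity), ← ht]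
    nlinarith
  · intro hle z hz
    calc z ⬝ᵥ N *ᵥ z ≤ c / R ^ 2 * (z ⬝ᵥ z) := hle z
      _ ≤ c / R ^ 2 * R ^ 2 := by gcongr; exact hz
      _ = c := div_mul_cancel₀ _ (by positivity)

variable [DecidableEq ι]

theorem dotProduct_diagonal_mulVec (d z : ι → ℝ) :
    z ⬝ᵥ diagonal d *ᵥ z = ∑ i, d i * z i ^ 2 := by
  simp only [dotProduct, mulVec_diagonal]
  exact Finset.sum_congr rfl fun i _ => by ring

theorem dotProduct_diagonal_mulVec_le {d : ι → ℝ} {c : ℝ} (hd : ∀ i, d i ≤ c) (z : ι → ℝ) :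
    z ⬝ᵥ diagonal d *ᵥ z ≤ c * (z ⬝ᵥ z) := by
  rw [dotProduct_diagonal_mulVec, dotProduct, Finset.mul_sum]
  exact Finset.sum_le_sum fun i _ => by nlinarith [hd i, sq_nonneg (z i)]

theorem diagonal_mul_sq_dotProduct_row_le {d : ι → ℝ} (hd : 0 ≤ d) {T : Matrix ι ι ℝ} {c : ℝ}
    (hle : ∀ z, z ⬝ᵥ (Tᵀ * diagonal d * T) *ᵥ z ≤ c * (z ⬝ᵥ z)) (i : ι) :
    d i * (T i ⬝ᵥ T i) ^ 2 ≤ c * (T i ⬝ᵥ T i) :=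
  calc d i * (T i ⬝ᵥ T i) ^ 2 = d i * (T *ᵥ T i) i ^ 2 := rfl
    _ ≤ ∑ k, d k * (T *ᵥ T i) k ^ 2 :=
      Finset.single_le_sum (f := fun k => d k * (T *ᵥ T i) k ^ 2)
        (fun k _ => mul_nonneg (hd k) (sq_nonneg _)) (Finset.mem_univ i)
    _ = T i ⬝ᵥ (Tᵀ * diagonal d * T) *ᵥ T i := by
      rw [dotProduct_transpose_mul_mul_mulVec, dotProduct_diagonal_mulVec]
    _ ≤ c * (T i ⬝ᵥ T i) := hle (T i)

end Quadratic

section Symplectic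

variable {n : ℕ}

theorem stdJ_mul_stdJ : stdJ n * stdJ n = -1 := by
  simp [stdJ, fromBlocks_multiply, ← fromBlocks_one, fromBlocks_neg]

theorem stdJ_mulVec_dotProduct_self (x : Fin n ⊕ Fin n → ℝ) :
    (stdJ n *ᵥ x) ⬝ᵥ (stdJ n *ᵥ x) = x ⬝ᵥ x := by
  simp [stdJ, fromBlocks_mulVec, neg_mulVec, dotProduct, Fintype.sum_sum_type, add_comm]

theorem stdJ_inl_inr (j : Fin n) : stdJ n (Sum.inl j) (Sum.inr j) = 1 := by
  simp [stdJ]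

namespace IsSymplectic

variable {S T : Matrix (Fin n ⊕ Fin n) (Fin n ⊕ Fin n) ℝ}

theorem mul (hS : IsSymplectic S) (hT : IsSymplectic T) : IsSymplectic (S * T) := by
  unfold IsSymplectic at *
  calc (S * T)ᵀ * stdJ n * (S * T) = Tᵀ * (Sᵀ * stdJ n * S) * T := by
        simp only [transpose_mul, Matrix.mul_assoc]
    _ = stdJ n := by rw [hS, hT]

theorem left_inverse (hS : IsSymplectic S) : -(stdJ n * Sᵀ * stdJ n) * S = 1 := by
  calc -(stdJ n * Sᵀ * stdJ n) * S = -(stdJ n * (Sᵀ * stdJ n * S)) := by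
        simp only [neg_mul, Matrix.mul_assoc]
    _ = 1 := by rw [hS, stdJ_mul_stdJ, neg_neg]

theorem isUnit_det_s13 (hS : IsSymplectic S) : IsUnit S.det :=
  isUnit_det_of_left_inverse hS.left_inverse

theorem transpose_s13 (hS : IsSymplectic S) : IsSymplectic Sᵀ := by
  have h : S * (stdJ n * Sᵀ * stdJ n) = -1 := by
    rw [← neg_neg (S * _), ← mul_neg, mul_eq_one_comm.2 hS.left_inverse]
  unfold IsSymplectic
  calc Sᵀᵀ * stdJ n * Sᵀ = -(S * (stdJ n * Sᵀ * stdJ n) * stdJ n) := by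
        simp only [transpose_transpose, Matrix.mul_assoc, stdJ_mul_stdJ, mul_neg, mul_one,
          neg_neg]
    _ = stdJ n := by rw [h, neg_mul, one_mul, neg_neg]

theorem nonsing_inv (hS : IsSymplectic S) : IsSymplectic S⁻¹ := by
  have hSS : S * S⁻¹ = 1 := mul_nonsing_inv S hS.isUnit_det_s13
  unfold IsSymplectic at *
  calc S⁻¹ᵀ * stdJ n * S⁻¹ = S⁻¹ᵀ * (Sᵀ * stdJ n * S) * S⁻¹ := by rw [hS]
    _ = (S * S⁻¹)ᵀ * stdJ n * (S * S⁻¹) := by simp only [transpose_mul, Matrix.mul_assoc]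
    _ = stdJ n := by rw [hSS, transpose_one, Matrix.one_mul, Matrix.mul_one]

end IsSymplectic

theorem one_le_dotProduct_self_mul_of_isSymplectic_transpose
    {T : Matrix (Fin n ⊕ Fin n) (Fin n ⊕ Fin n) ℝ} (hT : IsSymplectic Tᵀ) (j : Fin n) :
    1 ≤ (T (Sum.inl j) ⬝ᵥ T (Sum.inl j)) * (T (Sum.inr j) ⬝ᵥ T (Sum.inr j)) := by
  have hω : T (Sum.inl j) ⬝ᵥ stdJ n *ᵥ T (Sum.inr j) = 1 := by
    have h := congrFun (congrFun hT (Sum.inl j)) (Sum.inr j)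
    rwa [transpose_transpose, mul_mul_apply, transpose_transpose, stdJ_inl_inr] at h
  calc 1 = (T (Sum.inl j) ⬝ᵥ stdJ n *ᵥ T (Sum.inr j)) ^ 2 := by rw [hω, one_pow]
    _ ≤ _ := by
      rw [← stdJ_mulVec_dotProduct_self (T (Sum.inr j))]
      exact sq_dotProduct_le _ _

theorem IsSymplectic.le_of_forall_transpose_mul_diagonal_mul_le
    {T : Matrix (Fin n ⊕ Fin n) (Fin n ⊕ Fin n) ℝ} (hT : IsSymplectic T)
    {lam : Fin n → ℝ} (hlam : 0 ≤ lam) {c : ℝ}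
    (hle : ∀ z, z ⬝ᵥ (Tᵀ * diagonal (Sum.elim lam lam) * T) *ᵥ z ≤ c * (z ⬝ᵥ z)) (j : Fin n) :
    lam j ≤ c := by
  have hd : 0 ≤ Sum.elim lam lam := fun i => by cases i <;> exact hlam _
  have hbp := diagonal_mul_sq_dotProduct_row_le hd hle (Sum.inl j)
  have hbq := diagonal_mul_sq_dotProduct_row_le hd hle (Sum.inr j)
  have hpq := one_le_dotProduct_self_mul_of_isSymplectic_transpose hT.transpose_s13 j
  set p := T (Sum.inl j) ⬝ᵥ T (Sum.inl j)
  set q := T (Sum.inr j) ⬝ᵥ T (Sum.inr j)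
  simp only [Sum.elim_inl, Sum.elim_inr] at hbp hbq
  have hp : 0 ≤ p := by simpa using dotProduct_self_star_nonneg (T (Sum.inl j))
  have hq : 0 ≤ q := by simpa using dotProduct_self_star_nonneg (T (Sum.inr j))
  have hp0 : 0 < p := by nlinarith
  have hq0 : 0 < q := by nlinarith
  have hlp : lam j * p ≤ c := le_of_mul_le_mul_right (by nlinarith) hp0
  have hlq : lam j * q ≤ c := le_of_mul_le_mul_right (by nlinarith) hq0
  have hc : 0 ≤ c := (mul_nonneg (hlam j) hp).trans hlp
  nlinarith [hlam j, mul_le_mul hlp hlq (mul_nonneg (hlam j) hq) hc]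

theorem exists_isSymplectic_forall_le_iff {M S₀ : Matrix (Fin n ⊕ Fin n) (Fin n ⊕ Fin n) ℝ}
    (hS₀ : IsSymplectic S₀) {lam : Fin n → ℝ} (hlam : 0 ≤ lam)
    (hdiag : S₀ᵀ * M * S₀ = diagonal (Sum.elim lam lam)) (c : ℝ) :
    (∃ S, IsSymplectic S ∧ ∀ z, z ⬝ᵥ (Sᵀ * M * S) *ᵥ z ≤ c * (z ⬝ᵥ z)) ↔ ∀ j, lam j ≤ c := by
  constructor
  · rintro ⟨S, hS, hle⟩
    have hS₀S : S₀ * S₀⁻¹ = 1 := mul_nonsing_inv S₀ hS₀.isUnit_det_s13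
    have hN : Sᵀ * M * S = (S₀⁻¹ * S)ᵀ * diagonal (Sum.elim lam lam) * (S₀⁻¹ * S) :=
      calc Sᵀ * M * S = Sᵀ * (S₀ * S₀⁻¹)ᵀ * M * (S₀ * S₀⁻¹) * S := by
            rw [hS₀S, transpose_one, Matrix.mul_one, Matrix.mul_one]
        _ = (S₀⁻¹ * S)ᵀ * (S₀ᵀ * M * S₀) * (S₀⁻¹ * S) := by
            simp only [transpose_mul, Matrix.mul_assoc]
        _ = _ := by rw [hdiag]
    exact (hS₀.nonsing_inv.mul hS).le_of_forall_transpose_mul_diagonal_mul_le hlam (hN ▸ hle)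
  · intro hc
    refine ⟨S₀, hS₀, fun z => ?_⟩
    rw [hdiag]
    exact dotProduct_diagonal_mulVec_le (fun i => by cases i <;> exact hc _) z

end Symplectic

theorem sSup_pi_mul_sq_eq {P : ℝ → Prop} {l c : ℝ} (hl : 0 < l) (hc : 0 < c)
    (hP : ∀ R, 0 < R → (P R ↔ l * R ^ 2 ≤ c)) :
    sSup {a | ∃ R, 0 < R ∧ a = Real.pi * R ^ 2 ∧ P R} = Real.pi * c / l := by
  have hR₀ : 0 < √(c / l) := Real.sqrt_pos.2 (div_pos hc hl)
  have hsq : √(c / l) ^ 2 = c / l := Real.sq_sqrt (div_pos hc hl).le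
  refine IsGreatest.csSup_eq ⟨⟨√(c / l), hR₀, by rw [hsq, mul_div_assoc], (hP _ hR₀).2 ?_⟩, ?_⟩
  · rw [hsq, mul_div_cancel₀ _ hl.ne']
  · rintro _ ⟨R, hR, rfl, hPR⟩
    rw [le_div_iff₀ hl]
    nlinarith [Real.pi_pos, (hP R hR).1 hPR]

theorem stmt13_general {n : ℕ} (hn : 0 < n) (ℏ : ℝ) (hℏ : 0 < ℏ)
    (M : Matrix (Fin n ⊕ Fin n) (Fin n ⊕ Fin n) ℝ)
    (lam : Fin n → ℝ) (hlampos : ∀ j, 0 < lam j) (hord : Antitone lam)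
    (S₀ : Matrix (Fin n ⊕ Fin n) (Fin n ⊕ Fin n) ℝ) (hS₀ : IsSymplectic S₀)
    (hdiag : S₀ᵀ * M * S₀ = Matrix.fromBlocks (Matrix.diagonal lam) 0 0 (Matrix.diagonal lam)) :
    (∀ R : ℝ, 0 < R →
      ((∃ S : Matrix (Fin n ⊕ Fin n) (Fin n ⊕ Fin n) ℝ, IsSymplectic S ∧
          S.mulVec '' {z : Fin n ⊕ Fin n → ℝ | z ⬝ᵥ z ≤ R ^ 2}
            ⊆ {z : Fin n ⊕ Fin n → ℝ | z ⬝ᵥ M.mulVec z ≤ ℏ})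
        ↔ lam ⟨0, hn⟩ * R ^ 2 ≤ ℏ)) ∧
    sSup {a : ℝ | ∃ R : ℝ, 0 < R ∧ a = Real.pi * R ^ 2 ∧
        ∃ S : Matrix (Fin n ⊕ Fin n) (Fin n ⊕ Fin n) ℝ, IsSymplectic S ∧
          S.mulVec '' {z : Fin n ⊕ Fin n → ℝ | z ⬝ᵥ z ≤ R ^ 2}
            ⊆ {z : Fin n ⊕ Fin n → ℝ | z ⬝ᵥ M.mulVec z ≤ ℏ}}
      = Real.pi * ℏ / lam ⟨0, hn⟩ := by
  rw [fromBlocks_diagonal] at hdiag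
  have hcap (R : ℝ) (hR : 0 < R) :
      (∃ S, IsSymplectic S ∧ S.mulVec '' {z | z ⬝ᵥ z ≤ R ^ 2} ⊆ {z | z ⬝ᵥ M *ᵥ z ≤ ℏ}) ↔
        lam ⟨0, hn⟩ * R ^ 2 ≤ ℏ := by
    simp only [Set.image_subset_iff, Set.preimage_ofPred_eq,
      ← dotProduct_transpose_mul_mul_mulVec, setOf_dotProduct_self_le_subset_iff _ hR hℏ.le]
    rw [exists_isSymplectic_forall_le_iff hS₀ (fun j => (hlampos j).le) hdiag,
      ← le_div_iff₀ (by positivity)]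
    exact ⟨fun h => h _, fun h j => (hord (Fin.le_iff_val_le_val.2 (Nat.zero_le _))).trans h⟩
  exact ⟨hcap, sSup_pi_mul_sq_eq (hlampos _) hℏ hcap⟩

/-- **symplectic capacity of an ellipsoid.** Let `M` be symmetric positive definite
with symplectic eigenvalues `λ₁ ≥ … ≥ λₙ > 0` and `Ω = {z : zᵀMz ≤ ℏ}`. For every `R > 0`, a
symplectic ball `S(B_R)` fits inside `Ω` iff `λ₁ R² ≤ ℏ`; consequently the supremum of `π R²` over
all symplectic balls `S(B_R) ⊆ Ω` equals `πℏ/λ₁`. (`B_R = {z : z ⬝ᵥ z ≤ R²}`.) -/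
theorem stmt13 {n : ℕ} (hn : 0 < n) (ℏ : ℝ) (hℏ : 0 < ℏ)
    (M : Matrix (Fin n ⊕ Fin n) (Fin n ⊕ Fin n) ℝ)
    (hMSymm : M.IsSymm) (hMPos : M.PosDef)
    (lam : Fin n → ℝ) (hlampos : ∀ j, 0 < lam j) (hord : Antitone lam)
    (S₀ : Matrix (Fin n ⊕ Fin n) (Fin n ⊕ Fin n) ℝ) (hS₀ : IsSymplectic S₀)
    (hdiag : S₀ᵀ * M * S₀ = Matrix.fromBlocks (Matrix.diagonal lam) 0 0 (Matrix.diagonal lam)) :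
    (∀ R : ℝ, 0 < R →
      ((∃ S : Matrix (Fin n ⊕ Fin n) (Fin n ⊕ Fin n) ℝ, IsSymplectic S ∧
          S.mulVec '' {z : Fin n ⊕ Fin n → ℝ | z ⬝ᵥ z ≤ R ^ 2}
            ⊆ {z : Fin n ⊕ Fin n → ℝ | z ⬝ᵥ M.mulVec z ≤ ℏ})
        ↔ lam ⟨0, hn⟩ * R ^ 2 ≤ ℏ)) ∧
    sSup {a : ℝ | ∃ R : ℝ, 0 < R ∧ a = Real.pi * R ^ 2 ∧
        ∃ S : Matrix (Fin n ⊕ Fin n) (Fin n ⊕ Fin n) ℝ, IsSymplectic S ∧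
          S.mulVec '' {z : Fin n ⊕ Fin n → ℝ | z ⬝ᵥ z ≤ R ^ 2}
            ⊆ {z : Fin n ⊕ Fin n → ℝ | z ⬝ᵥ M.mulVec z ≤ ℏ}}
      = Real.pi * ℏ / lam ⟨0, hn⟩ :=
  stmt13_general hn ℏ hℏ M lam hlampos hord S₀ hS₀ hdiag
end
end
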